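/- arXiv:0901.1375 — 7 statements merged into one kernel-verified Lean document; each statement's English description precedes it below -/
import Mathlib

section
/- Let S be a non-empty subset of ℝ^d with dim(S) = d (i.e., the affine hull of S is all of ℝ^d). Then the number of lattice width directions of S is at most 3^d − 1. -/
open Set

noncomputable section

/-- Coordinatewise cast of an integer vector into `ℝ^d`. -/
def ic {d : ℕ} (v : Fin d → ℤ) : Fin d → ℝ := fun i => (v i : ℝ)

/-- Evaluation of an integer dual vector `v ∈ (ℤ^d)*` at a point `x ∈ ℝ^d`. -/
def ieval {d : ℕ} (v : Fin d → ℤ) (x : Fin d → ℝ) : ℝ := ∑ i, (v i : ℝ) * x i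

/-- `v` is a direction in which `S` is bounded (i.e. `v ∈ D(S)`). -/
def IsBddDir {d : ℕ} (S : Set (Fin d → ℝ)) (v : Fin d → ℤ) : Prop :=
  BddAbove (ieval v '' S) ∧ BddBelow (ieval v '' S)

/-- The width of `S` in direction `v`: `sup v(S) − inf v(S)`. -/
def dirWidth {d : ℕ} (S : Set (Fin d → ℝ)) (v : Fin d → ℤ) : ℝ :=
  sSup (ieval v '' S) - sInf (ieval v '' S)

/-- The lattice width of `S`: the infimum of the widths over all nonzero
    integer directions in which `S` is bounded (`⊤` if there is no such direction). -/
def latticeWidth {d : ℕ} (S : Set (Fin d → ℝ)) : EReal :=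
  ⨅ v ∈ {v : Fin d → ℤ | v ≠ 0 ∧ IsBddDir S v}, ((dirWidth S v : ℝ) : EReal)

/-- The set `S'` of lattice width directions of `S`. -/
def widthDirs {d : ℕ} (S : Set (Fin d → ℝ)) : Set (Fin d → ℤ) :=
  {v | v ≠ 0 ∧ IsBddDir S v ∧ ((dirWidth S v : ℝ) : EReal) = latticeWidth S}

/-- `ieval` as a linear map in `x`. -/
def ievalL {d : ℕ} (v : Fin d → ℤ) : (Fin d → ℝ) →ₗ[ℝ] ℝ where
  toFun := ieval v
  map_add' x y := by simp [ieval, mul_add, Finset.sum_add_distrib]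
  map_smul' c x := by
    simp [ieval, Finset.mul_sum]
    refine Finset.sum_congr rfl fun i _ => by ring

lemma ieval_third {d : ℕ} (v w u : Fin d → ℤ) (h : ∀ i, v i - w i = 3 * u i)
    (x : Fin d → ℝ) : ieval u x = (ieval v x - ieval w x) / 3 := by
  have : ieval v x - ieval w x = 3 * ieval u x := by
    simp only [ieval, Finset.mul_sum, ← Finset.sum_sub_distrib]
    refine Finset.sum_congr rfl fun i _ => ?_
    have hi := h i
    have : (v i : ℝ) - (w i : ℝ) = 3 * (u i : ℝ) := by exact_mod_cast congrArg (Int.cast : ℤ → ℝ) hi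
    rw [← sub_mul, this]; ring
  linarith

lemma width_third {d : ℕ} {S : Set (Fin d → ℝ)} (hne : S.Nonempty)
    {v w u : Fin d → ℤ} (hv : IsBddDir S v) (hw : IsBddDir S w)
    (h : ∀ i, v i - w i = 3 * u i) :
    IsBddDir S u ∧ dirWidth S u ≤ (dirWidth S v + dirWidth S w) / 3 := by
  have hub : ∀ y ∈ ieval u '' S, y ≤ (sSup (ieval v '' S) - sInf (ieval w '' S)) / 3 := by
    rintro y ⟨x, hx, rfl⟩
    rw [ieval_third v w u h]
    have h1 : ieval v x ≤ sSup (ieval v '' S) := le_csSup hv.1 ⟨x, hx, rfl⟩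
    have h2 : sInf (ieval w '' S) ≤ ieval w x := csInf_le hw.2 ⟨x, hx, rfl⟩
    linarith
  have hlb : ∀ y ∈ ieval u '' S, (sInf (ieval v '' S) - sSup (ieval w '' S)) / 3 ≤ y := by
    rintro y ⟨x, hx, rfl⟩
    rw [ieval_third v w u h]
    have h1 : sInf (ieval v '' S) ≤ ieval v x := csInf_le hv.2 ⟨x, hx, rfl⟩
    have h2 : ieval w x ≤ sSup (ieval w '' S) := le_csSup hw.1 ⟨x, hx, rfl⟩
    linarith
  have hBA : BddAbove (ieval u '' S) := ⟨_, hub⟩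
  have hBB : BddBelow (ieval u '' S) := ⟨_, hlb⟩
  refine ⟨⟨hBA, hBB⟩, ?_⟩
  have h1 : sSup (ieval u '' S) ≤ (sSup (ieval v '' S) - sInf (ieval w '' S)) / 3 :=
    csSup_le (hne.image _) hub
  have h2 : (sInf (ieval v '' S) - sSup (ieval w '' S)) / 3 ≤ sInf (ieval u '' S) :=
    le_csInf (hne.image _) hlb
  unfold dirWidth
  linarith

lemma dirWidth_pos {d : ℕ} {S : Set (Fin d → ℝ)} (hne : S.Nonempty)
    (hdim : affineSpan ℝ S = ⊤) {v : Fin d → ℤ} (hv0 : v ≠ 0)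
    (hv : IsBddDir S v) : 0 < dirWidth S v := by
  obtain ⟨x0, hx0⟩ := hne
  have hle : sInf (ieval v '' S) ≤ sSup (ieval v '' S) :=
    le_trans (csInf_le hv.2 ⟨x0, hx0, rfl⟩) (le_csSup hv.1 ⟨x0, hx0, rfl⟩)
  rcases lt_or_eq_of_le hle with h | h
  · unfold dirWidth; linarith
  -- constant case: contradiction with full-dimensionality
  exfalso
  have hconst : ∀ x ∈ S, ieval v x = sInf (ieval v '' S) := fun x hx =>
    le_antisymm (h ▸ le_csSup hv.1 ⟨x, hx, rfl⟩) (csInf_le hv.2 ⟨x, hx, rfl⟩)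
  have hvs : vectorSpan ℝ S = ⊤ := by
    exact AffineSubspace.vectorSpan_eq_top_of_affineSpan_eq_top ℝ _ _ hdim
  have hker : vectorSpan ℝ S ≤ LinearMap.ker (ievalL v) := by
    rw [vectorSpan_def, Submodule.span_le]
    rintro z ⟨x, hx, y, hy, rfl⟩
    have : ievalL v (x - y) = 0 := by
      have := hconst x hx
      have := hconst y hy
      simp only [map_sub]
      show ieval v x - ieval v y = 0
      linarith
    simpa using this
  have hzero : ∀ z, ievalL v z = 0 := by
    intro z
    have : z ∈ LinearMap.ker (ievalL v) := hker (hvs ▸ Submodule.mem_top)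
    simpa using this
  obtain ⟨i, hi⟩ := Function.ne_iff.mp hv0
  have := hzero (Pi.single i 1)
  have heval : ievalL v (Pi.single i 1) = (v i : ℝ) := by
    show ieval v (Pi.single i 1) = (v i : ℝ)
    simp [ieval, Pi.single_apply, mul_ite, Finset.sum_ite_eq']
  rw [heval] at this
  exact hi (by exact_mod_cast this)

lemma key_contradiction {d : ℕ} {S : Set (Fin d → ℝ)} (hne : S.Nonempty)
    (hdim : affineSpan ℝ S = ⊤) {v w : Fin d → ℤ}
    (hv : v ∈ widthDirs S) (hw : IsBddDir S w) (hvw : v ≠ w)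
    (hwle : dirWidth S w ≤ dirWidth S v)
    (hmod : ∀ i, (3:ℤ) ∣ v i - w i) : False := by
  obtain ⟨hv0, hvb, hveq⟩ := hv
  choose u hu using hmod
  have hu' : ∀ i, v i - w i = 3 * u i := fun i => hu i
  have hu0 : u ≠ 0 := by
    obtain ⟨i, hi⟩ := Function.ne_iff.mp hvw
    intro h0
    apply hi
    have := hu' i
    rw [h0] at this
    simp at this
    omega
  obtain ⟨hub, hule⟩ := width_third hne hvb hw hu'
  have hpos : 0 < dirWidth S v := dirWidth_pos hne hdim hv0 hvb
  have hlt : dirWidth S u < dirWidth S v := by linarith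
  have hle : latticeWidth S ≤ ((dirWidth S u : ℝ) : EReal) := by
    exact iInf₂_le u ⟨hu0, hub⟩
  rw [← hveq] at hle
  have : dirWidth S v ≤ dirWidth S u := by exact_mod_cast hle
  linarith

/-- The number of lattice width directions of a nonempty full-dimensional
    subset of `ℝ^d` is at most `3^d − 1`. -/
theorem number_of_lattice_width_directions_le {d : ℕ} (S : Set (Fin d → ℝ))
    (hne : S.Nonempty) (hdim : affineSpan ℝ S = ⊤) :
    (widthDirs S).Finite ∧ (widthDirs S).ncard ≤ 3 ^ d - 1 := by
  set φ : (Fin d → ℤ) → (Fin d → ZMod 3) := fun v i => ((v i : ℤ) : ZMod 3) with hφ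
  -- injectivity on widthDirs
  have hinj : InjOn φ (widthDirs S) := by
    intro v hv w hw heq
    by_contra hvw
    refine key_contradiction hne hdim hv hw.2.1 hvw ?_ ?_
    · have : ((dirWidth S w : ℝ) : EReal) = ((dirWidth S v : ℝ) : EReal) :=
        hw.2.2.trans hv.2.2.symm
      exact_mod_cast this.le
    · intro i
      have : ((v i - w i : ℤ) : ZMod 3) = 0 := by
        push_cast
        have h1 : ((v i : ℤ) : ZMod 3) = ((w i : ℤ) : ZMod 3) := congrFun heq i
        rw [h1]; ring
      exact (ZMod.intCast_zmod_eq_zero_iff_dvd _ _).mp this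
  -- image avoids 0
  have hzero : ∀ v ∈ widthDirs S, φ v ≠ 0 := by
    intro v hv h0
    have hw0 : IsBddDir S (0 : Fin d → ℤ) ∧ dirWidth S (0 : Fin d → ℤ) = 0 := by
      have himg : ieval (0 : Fin d → ℤ) '' S = {0} := by
        have : ieval (0 : Fin d → ℤ) = fun _ => (0:ℝ) := by
          funext x; simp [ieval]
        rw [this]
        exact hne.image_const 0
      constructor
      · constructor <;> rw [himg]
        · exact bddAbove_singleton
        · exact bddBelow_singleton
      · unfold dirWidth; rw [himg, csSup_singleton, csInf_singleton]; ring
    refine key_contradiction hne hdim hv hw0.1 hv.1 ?_ ?_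
    · rw [hw0.2]
      exact (dirWidth_pos hne hdim hv.1 hv.2.1).le
    · intro i
      have : ((v i : ℤ) : ZMod 3) = 0 := congrFun h0 i
      have := (ZMod.intCast_zmod_eq_zero_iff_dvd _ _).mp this
      simpa using this
  have hfin : (widthDirs S).Finite :=
    Set.Finite.of_finite_image (Set.toFinite _) hinj
  refine ⟨hfin, ?_⟩
  have hsub : φ '' widthDirs S ⊆ ({0} : Set (Fin d → ZMod 3))ᶜ := by
    rintro y ⟨v, hv, rfl⟩
    exact hzero v hv
  have hcard1 : (widthDirs S).ncard = (φ '' widthDirs S).ncard :=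
    (Set.ncard_image_of_injOn hinj).symm
  have hcard2 : (φ '' widthDirs S).ncard ≤ (({0} : Set (Fin d → ZMod 3))ᶜ).ncard :=
    Set.ncard_le_ncard hsub (Set.toFinite _)
  have hcard3 : (({0} : Set (Fin d → ZMod 3))ᶜ).ncard = 3 ^ d - 1 := by
    have h := Set.ncard_add_ncard_compl ({0} : Set (Fin d → ZMod 3))
    have hnc : Nat.card (Fin d → ZMod 3) = 3 ^ d := by
      simp [Nat.card_eq_fintype_card]
    rw [hnc, Set.ncard_singleton] at h
    omega
  omega
end
end

section
/- Let K ⊆ ℝ^d be a centrally-symmetric convex set (i.e., K = −K) such that the only lattice point of ℤ^d in the relative interior of K is the origin. Then the number of lattice points of ℤ^d contained in K is at most 3^d. -/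
open Set

noncomputable section

/-- `K_ℤ`: the set of lattice points of `ℤ^d` lying in `K`. -/
def latticePts {d : ℕ} (K : Set (Fin d → ℝ)) : Set (Fin d → ℤ) := {x | ic x ∈ K}

/-- `K°_ℤ`: the set of lattice points of `ℤ^d` lying in the relative interior of `K`. -/
def relintLatticePts {d : ℕ} (K : Set (Fin d → ℝ)) : Set (Fin d → ℤ) :=
  {x | ic x ∈ intrinsicInterior ℝ K}

lemma mem_iI_iff {d : ℕ} {K : Set (Fin d → ℝ)} {x : Fin d → ℝ} :
    x ∈ intrinsicInterior ℝ K ↔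
      x ∈ affineSpan ℝ K ∧ ∃ t ∈ nhds x, t ∩ (affineSpan ℝ K : Set (Fin d → ℝ)) ⊆ K := by
  constructor
  · rw [mem_intrinsicInterior]
    rintro ⟨y, hy, rfl⟩
    refine ⟨y.2, ?_⟩
    rw [mem_interior_iff_mem_nhds, nhds_induced, Filter.mem_comap] at hy
    obtain ⟨t, ht, hsub⟩ := hy
    refine ⟨t, ht, ?_⟩
    rintro z ⟨hzt, hzS⟩
    exact hsub (show (⟨z, hzS⟩ : affineSpan ℝ K) ∈ _ from hzt)
  · rintro ⟨hxS, t, ht, hsub⟩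
    rw [mem_intrinsicInterior]
    refine ⟨⟨x, hxS⟩, ?_, rfl⟩
    rw [mem_interior_iff_mem_nhds, nhds_induced, Filter.mem_comap]
    exact ⟨t, ht, fun z hz => hsub ⟨hz, z.2⟩⟩

lemma combo_mem_iI {d : ℕ} {K : Set (Fin d → ℝ)} (hconv : Convex ℝ K)
    (h0 : (0 : Fin d → ℝ) ∈ intrinsicInterior ℝ K) {m : Fin d → ℝ} (hm : m ∈ K) :
    (2/3 : ℝ) • m ∈ intrinsicInterior ℝ K := by
  rw [mem_iI_iff] at h0 ⊢
  obtain ⟨h0S, t, ht, hsub⟩ := h0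
  have hmS : m ∈ affineSpan ℝ K := subset_affineSpan ℝ K hm
  have hwS : (2/3 : ℝ) • m ∈ affineSpan ℝ K := by
    have := AffineSubspace.smul_vsub_vadd_mem (affineSpan ℝ K) (2/3 : ℝ) hmS h0S h0S
    simpa using this
  refine ⟨hwS, ?_⟩
  set φ : (Fin d → ℝ) → (Fin d → ℝ) := fun x => (3:ℝ) • x - (2:ℝ) • m with hφ
  have hφc : Continuous φ := by continuity
  have hφw : φ ((2/3 : ℝ) • m) = 0 := by
    simp [hφ, smul_smul]; module
  refine ⟨φ ⁻¹' t, ?_, ?_⟩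
  · exact hφc.continuousAt.preimage_mem_nhds (by rwa [hφw])
  · rintro x ⟨hxt, hxS⟩
    have hφxS : φ x ∈ affineSpan ℝ K := by
      have := AffineSubspace.smul_vsub_vadd_mem (affineSpan ℝ K) (3 : ℝ) hxS hmS hmS
      have e : (3:ℝ) • (x -ᵥ m) +ᵥ m = φ x := by simp [hφ]; module
      rwa [e] at this
    have hφxK : φ x ∈ K := hsub ⟨hxt, hφxS⟩
    have : (1/3 : ℝ) • φ x + (2/3 : ℝ) • m = x := by simp [hφ]; module
    rw [← this]
    exact hconv hφxK hm (by norm_num) (by norm_num) (by norm_num)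

/-- Minkowski's `3^d` theorem (upper bound): a centrally-symmetric convex set
    whose relative interior contains no lattice point except the origin
    contains at most `3^d` lattice points. -/
theorem card_latticePts_le_three_pow {d : ℕ} (K : Set (Fin d → ℝ))
    (hconv : Convex ℝ K) (hsym : K = -K)
    (hint : relintLatticePts K = {0}) :
    (latticePts K).Finite ∧ (latticePts K).ncard ≤ 3 ^ d := by
  have h0 : (0 : Fin d → ℝ) ∈ intrinsicInterior ℝ K := by
    have : (0 : Fin d → ℤ) ∈ relintLatticePts K := by rw [hint]; rfl
    have h := this
    simp only [relintLatticePts, mem_setOf_eq] at h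
    have : ic (0 : Fin d → ℤ) = (0 : Fin d → ℝ) := by
      funext i; simp [ic]
    rwa [this] at h
  set f : (Fin d → ℤ) → (Fin d → ZMod 3) := fun v i => (v i : ZMod 3) with hf
  have hinj : Set.InjOn f (latticePts K) := by
    intro x hx y hy hxy
    -- each coordinate of x - y is divisible by 3
    have hdvd : ∀ i, (3 : ℤ) ∣ (x i - y i) := by
      intro i
      have : ((x i - y i : ℤ) : ZMod 3) = 0 := by
        push_cast
        have : (x i : ZMod 3) = (y i : ZMod 3) := congrFun hxy i
        rw [this]; ring
      exact (ZMod.intCast_zmod_eq_zero_iff_dvd _ 3).mp this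
    set z : Fin d → ℤ := fun i => (x i - y i) / 3 with hz
    have hz3 : ∀ i, (3 : ℤ) * z i = x i - y i := fun i => Int.mul_ediv_cancel' (hdvd i)
    -- the midpoint m of ic x and -ic y lies in K
    have hyK : -ic y ∈ K := by
      have : ic y ∈ -K := hsym ▸ hy
      simpa using this
    set m : Fin d → ℝ := (1/2 : ℝ) • ic x + (1/2 : ℝ) • (-ic y) with hm
    have hmK : m ∈ K := hconv hx hyK (by norm_num) (by norm_num) (by norm_num)
    have hicz : ic z = (2/3 : ℝ) • m := by
      funext i
      have h3 : (3 : ℝ) * (z i : ℝ) = (x i : ℝ) - (y i : ℝ) := by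
        exact_mod_cast congrArg (fun n : ℤ => (n : ℝ)) (hz3 i)
      show (z i : ℝ) = (2/3 : ℝ) * ((1/2 : ℝ) * (x i : ℝ) + (1/2 : ℝ) * (-(y i : ℝ)))
      linarith
    have hzint : z ∈ relintLatticePts K := by
      simp only [relintLatticePts, mem_setOf_eq, hicz]
      exact combo_mem_iI hconv h0 hmK
    rw [hint] at hzint
    have hz0 : z = 0 := hzint
    funext i
    have h1 : z i = 0 := by rw [hz0]; rfl
    have h2 := hz3 i
    omega
  have hfin : (latticePts K).Finite :=
    Set.Finite.of_finite_image (Set.toFinite _) hinj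
  refine ⟨hfin, ?_⟩
  calc (latticePts K).ncard = (f '' latticePts K).ncard :=
        (Set.ncard_image_of_injOn hinj).symm
    _ ≤ (Set.univ : Set (Fin d → ZMod 3)).ncard :=
        Set.ncard_le_ncard (Set.subset_univ _) (Set.toFinite _)
    _ = 3 ^ d := by
        rw [Set.ncard_univ, Nat.card_eq_fintype_card]
        simp
end
end

section
/- Let S ⊆ ℝ^d be a non-empty, compact, convex subset with dim(S) < d and d > 0. Then width(S) = 0, and the set S' of lattice width directions of S is non-empty if and only if S is contained in an affine hyperplane whose defining normal vector can be chosen in (ℤ^d)* (equivalently, with rational coordinates). -/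
open Set

noncomputable section

/-- Simultaneous Dirichlet approximation via pigeonhole. -/
lemma dirichlet_approx {d : ℕ} (w : Fin d → ℝ) {δ : ℝ} (hδ : 0 < δ) :
    ∃ (q : ℕ) (p : Fin d → ℤ), 1 ≤ q ∧ ∀ i, |(q : ℝ) * w i - p i| < δ := by
  obtain ⟨M, hM⟩ := exists_nat_gt (1 / δ)
  have hM0 : 0 < M := by
    have h1 : (0 : ℝ) < 1 / δ := by positivity
    exact_mod_cast h1.trans hM
  have hM0' : (0 : ℝ) < M := by exact_mod_cast hM0
  have hbox : ∀ x : ℝ, (⌊(M : ℝ) * Int.fract x⌋).toNat < M := by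
    intro x
    have h2 : (M : ℝ) * Int.fract x < M := by
      nlinarith [Int.fract_lt_one x, Int.fract_nonneg x]
    have h3 : ⌊(M : ℝ) * Int.fract x⌋ < (M : ℤ) := by
      apply Int.floor_lt.2; exact_mod_cast h2
    omega
  set f : Fin (M ^ d + 1) → (Fin d → Fin M) :=
    fun q i => ⟨(⌊(M : ℝ) * Int.fract ((q : ℕ) * w i)⌋).toNat, hbox _⟩ with hf
  have hcard : Fintype.card (Fin d → Fin M) < Fintype.card (Fin (M ^ d + 1)) := by
    simp
  obtain ⟨a, b, hab, hfab⟩ := Fintype.exists_ne_map_eq_of_card_lt f hcard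
  have key : ∀ a b : Fin (M ^ d + 1), (a : ℕ) < (b : ℕ) → f a = f b →
      ∃ (q : ℕ) (p : Fin d → ℤ), 1 ≤ q ∧ ∀ i, |(q : ℝ) * w i - p i| < δ := by
    intro a b hlt hfe
    refine ⟨(b : ℕ) - (a : ℕ), fun i => ⌊((b : ℕ) : ℝ) * w i⌋ - ⌊((a : ℕ) : ℝ) * w i⌋,
      by omega, fun i => ?_⟩
    set A := ((a : ℕ) : ℝ) * w i with hA
    set B := ((b : ℕ) : ℝ) * w i with hB
    have hfloor : ⌊(M : ℝ) * Int.fract A⌋ = ⌊(M : ℝ) * Int.fract B⌋ := by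
      have h0 := congrFun hfe i
      have h' : (⌊(M : ℝ) * Int.fract A⌋).toNat = (⌊(M : ℝ) * Int.fract B⌋).toNat :=
        congrArg Fin.val h0
      have h1 : (0 : ℤ) ≤ ⌊(M : ℝ) * Int.fract A⌋ :=
        Int.floor_nonneg.2 (mul_nonneg hM0'.le (Int.fract_nonneg _))
      have h2 : (0 : ℤ) ≤ ⌊(M : ℝ) * Int.fract B⌋ :=
        Int.floor_nonneg.2 (mul_nonneg hM0'.le (Int.fract_nonneg _))
      omega
    have habs : |(M : ℝ) * Int.fract B - (M : ℝ) * Int.fract A| < 1 :=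
      Int.abs_sub_lt_one_of_floor_eq_floor hfloor.symm
    have hfr : |Int.fract B - Int.fract A| < 1 / M := by
      rw [lt_div_iff₀ hM0']
      calc |Int.fract B - Int.fract A| * M = |(M : ℝ) * Int.fract B - M * Int.fract A| := by
            rw [← mul_sub, abs_mul, abs_of_pos hM0', mul_comm]
        _ < 1 := habs
    have hcast : (((b : ℕ) - (a : ℕ) : ℕ) : ℝ) = ((b : ℕ) : ℝ) - ((a : ℕ) : ℝ) := by
      push_cast [Nat.cast_sub hlt.le]; ring
    have heq : (((b : ℕ) - (a : ℕ) : ℕ) : ℝ) * w i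
        - ((⌊B⌋ - ⌊A⌋ : ℤ) : ℝ) = Int.fract B - Int.fract A := by
      rw [hcast]
      push_cast
      simp only [Int.fract]
      rw [hA, hB]
      ring
    rw [heq]
    calc |Int.fract B - Int.fract A| < 1 / M := hfr
      _ < δ := by rw [div_lt_iff₀ hM0']; rw [div_lt_iff₀ hδ] at hM; linarith
  rcases lt_or_gt_of_ne hab with h | h
  · exact key a b h hfab
  · exact key b a h hfab.symm

/-- For a nonempty compact convex set `S ⊆ ℝ^d` of dimension `< d` (with `d > 0`),
    the lattice width of `S` is `0`, and `S` has a lattice width direction if and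
    only if `S` lies in an affine hyperplane with an integral defining normal vector. -/
theorem width_of_lower_dimensional {d : ℕ} (hd : 0 < d) (S : Set (Fin d → ℝ))
    (hne : S.Nonempty) (hcomp : IsCompact S) (hconv : Convex ℝ S)
    (hdim : Module.finrank ℝ (vectorSpan ℝ S) < d) :
    latticeWidth S = (0 : EReal) ∧
      ((widthDirs S).Nonempty ↔
        ∃ v : Fin d → ℤ, v ≠ 0 ∧ ∃ c : ℝ, ∀ x ∈ S, ieval v x = c) := by
  classical
  have hcont : ∀ v : Fin d → ℤ, Continuous (ieval v) := fun v =>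
    continuous_finset_sum _ fun i _ => continuous_const.mul (continuous_apply i)
  have hbdd : ∀ v : Fin d → ℤ, IsBddDir S v := fun v =>
    ⟨(hcomp.image (hcont v)).bddAbove, (hcomp.image (hcont v)).bddBelow⟩
  have hattain : ∀ v : Fin d → ℤ, ∃ x ∈ S, ∃ y ∈ S,
      sSup (ieval v '' S) = ieval v x ∧ sInf (ieval v '' S) = ieval v y := by
    intro v
    obtain ⟨x, hx, hmax⟩ := hcomp.exists_isMaxOn hne (hcont v).continuousOn
    obtain ⟨y, hy, hmin⟩ := hcomp.exists_isMinOn hne (hcont v).continuousOn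
    refine ⟨x, hx, y, hy, ?_, ?_⟩
    · exact IsGreatest.csSup_eq ⟨⟨x, hx, rfl⟩, by
        rintro _ ⟨z, hz, rfl⟩; exact hmax hz⟩
    · exact IsLeast.csInf_eq ⟨⟨y, hy, rfl⟩, by
        rintro _ ⟨z, hz, rfl⟩; exact hmin hz⟩
  have hw_nonneg : ∀ v : Fin d → ℤ, 0 ≤ dirWidth S v := by
    intro v
    obtain ⟨x, hx, y, hy, hsup, hinf⟩ := hattain v
    have h1 : sInf (ieval v '' S) ≤ ieval v x := csInf_le (hbdd v).2 ⟨x, hx, rfl⟩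
    rw [dirWidth, hsup]
    linarith
  have h0le : (0 : EReal) ≤ latticeWidth S := by
    refine le_iInf₂ fun v hv => ?_
    exact_mod_cast hw_nonneg v
  have hVtop : vectorSpan ℝ S < ⊤ := by
    rw [lt_top_iff_ne_top]
    intro h
    rw [h, finrank_top] at hdim
    simp [Module.finrank_fintype_fun_eq_card] at hdim
  obtain ⟨f, hf0, hfmap⟩ :=
    (vectorSpan ℝ S).exists_dual_map_eq_bot_of_lt_top hVtop inferInstance
  set w : Fin d → ℝ := fun i => f (fun j => if i = j then (1 : ℝ) else 0) with hw
  have hf_eq : ∀ x : Fin d → ℝ, f x = ∑ i, x i * w i := by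
    intro x
    conv_lhs => rw [pi_eq_sum_univ x]
    rw [map_sum]
    simp [hw, smul_eq_mul]
  obtain ⟨i₀, hi₀⟩ : ∃ i, w i ≠ 0 := by
    by_contra h
    push_neg at h
    apply hf0
    apply LinearMap.ext
    intro x
    simp [hf_eq x, h]
  have hvanish : ∀ x ∈ S, ∀ y ∈ S, ∑ i, w i * (x i - y i) = 0 := by
    intro x hx y hy
    have hmem : x - y ∈ vectorSpan ℝ S := by
      have := vsub_mem_vectorSpan ℝ hx hy
      simpa using this
    have hz : f (x - y) = 0 := by
      have h1 : f (x - y) ∈ (vectorSpan ℝ S).map f := ⟨x - y, hmem, rfl⟩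
      rw [hfmap] at h1
      simpa using h1
    rw [hf_eq] at hz
    rw [← hz]
    apply Finset.sum_congr rfl
    intro i _
    simp [mul_comm]
  obtain ⟨C, hC⟩ := isBounded_iff_forall_norm_le.1 hcomp.isBounded
  set R : ℝ := |C| + 1 with hR
  have hR0 : 0 < R := by positivity
  have hxR : ∀ x ∈ S, ∀ i, |x i| ≤ R := by
    intro x hx i
    calc |x i| ≤ ‖x‖ := by simpa using norm_le_pi_norm x i
      _ ≤ C := hC x hx
      _ ≤ R := by rw [hR]; cases abs_cases C <;> linarith
  have hub : ∀ ε : ℝ, 0 < ε → latticeWidth S ≤ (ε : EReal) := by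
    intro ε hε
    have hwi₀ : 0 < |w i₀| := abs_pos.2 hi₀
    set δ : ℝ := min (ε / (2 * d * R + 1)) (|w i₀| / 2) with hδdef
    have hδ0 : 0 < δ := by
      apply lt_min
      · positivity
      · positivity
    obtain ⟨q, p, hq, hp⟩ := dirichlet_approx w hδ0
    have hq0 : (0 : ℝ) < q := by exact_mod_cast hq
    have hp0 : p ≠ 0 := by
      intro h
      have h1 := hp i₀
      rw [h] at h1
      simp only [Pi.zero_apply, Int.cast_zero, sub_zero] at h1
      rw [abs_mul, abs_of_pos hq0] at h1
      have h2 : |w i₀| ≤ (q : ℝ) * |w i₀| :=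
        le_mul_of_one_le_left (abs_nonneg _) (by exact_mod_cast hq)
      have h3 : δ ≤ |w i₀| / 2 := min_le_right _ _
      linarith
    have hwidth : dirWidth S p ≤ ε := by
      obtain ⟨x, hx, y, hy, hsup, hinf⟩ := hattain p
      rw [dirWidth, hsup, hinf]
      have hkey : ieval p x - ieval p y = ∑ i, (((p i : ℝ) - q * w i) * (x i - y i)) := by
        have hz := hvanish x hx y hy
        have h4 : ieval p x - ieval p y
            = ∑ i, (((p i : ℝ) - q * w i) * (x i - y i)) + q * ∑ i, w i * (x i - y i) := by
          rw [ieval, ieval, Finset.mul_sum, ← Finset.sum_sub_distrib, ← Finset.sum_add_distrib]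
          apply Finset.sum_congr rfl
          intro i _
          ring
        rw [h4, hz, mul_zero, add_zero]
      rw [hkey]
      have hbound : ∀ i : Fin d, |((p i : ℝ) - q * w i) * (x i - y i)| ≤ δ * (2 * R) := by
        intro i
        rw [abs_mul]
        apply mul_le_mul _ _ (abs_nonneg _) hδ0.le
        · rw [abs_sub_comm]
          exact (hp i).le
        · calc |x i - y i| ≤ |x i| + |y i| := abs_sub _ _
            _ ≤ R + R := add_le_add (hxR x hx i) (hxR y hy i)
            _ = 2 * R := by ring
      have hδε : δ * (2 * d * R + 1) ≤ ε := by
        have h4 : δ ≤ ε / (2 * d * R + 1) := min_le_left _ _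
        rw [le_div_iff₀ (by positivity)] at h4
        exact h4
      calc ∑ i, (((p i : ℝ) - q * w i) * (x i - y i))
          ≤ |∑ i, (((p i : ℝ) - q * w i) * (x i - y i))| := le_abs_self _
        _ ≤ ∑ i, |((p i : ℝ) - q * w i) * (x i - y i)| := Finset.abs_sum_le_sum_abs _ _
        _ ≤ ∑ _i : Fin d, δ * (2 * R) := Finset.sum_le_sum fun i _ => hbound i
        _ = (d : ℝ) * (δ * (2 * R)) := by
            rw [Finset.sum_const, Finset.card_univ, Fintype.card_fin, nsmul_eq_mul]
        _ ≤ ε := by nlinarith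
    have hle : latticeWidth S ≤ ((dirWidth S p : ℝ) : EReal) :=
      iInf₂_le p ⟨hp0, hbdd p⟩
    exact hle.trans (by exact_mod_cast hwidth)
  have hlw : latticeWidth S = (0 : EReal) := by
    refine le_antisymm ?_ h0le
    by_contra h
    rw [not_le] at h
    obtain ⟨ε, hε1, hε2⟩ := EReal.exists_between_coe_real h
    have h0ε : (0 : ℝ) < ε := by exact_mod_cast hε1
    exact absurd (hub ε h0ε) (not_le.2 hε2)
  refine ⟨hlw, ?_, ?_⟩
  · rintro ⟨v, hv0, hvb, hveq⟩
    rw [hlw] at hveq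
    have hzero : dirWidth S v = 0 := by exact_mod_cast hveq
    refine ⟨v, hv0, sInf (ieval v '' S), fun x hx => le_antisymm ?_ ?_⟩
    · have h1 : ieval v x ≤ sSup (ieval v '' S) := le_csSup (hbdd v).1 ⟨x, hx, rfl⟩
      rw [dirWidth] at hzero
      linarith
    · exact csInf_le (hbdd v).2 ⟨x, hx, rfl⟩
  · rintro ⟨v, hv0, c, hc⟩
    obtain ⟨x, hx, y, hy, hsup, hinf⟩ := hattain v
    have hzero : dirWidth S v = 0 := by
      rw [dirWidth, hsup, hinf, hc x hx, hc y hy, sub_self]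
    exact ⟨v, hv0, hbdd v, by rw [hlw]; exact_mod_cast hzero⟩
end
end

section
/- Let S ⊆ ℝ^d satisfy 0 < width(S) < ∞. Then the convex hull of S' is a non-empty, convex, centrally-symmetric subset of (ℝ^d)* whose relative interior contains no lattice point of (ℤ^d)* other than the origin; moreover, the lattice points on the boundary of conv(S') are precisely the elements of S'. -/
/-!
Let `m` be the lattice width. The real directions of width at most `m` form a convex set containing
`S'`, hence `conv S'`; so a nonzero lattice point of `conv S'` has width at most `m` and lies in
`S'`. If some `v ∈ S'` were in the relative interior, then `t • v ∈ conv S'` for some `t > 1`, and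
`v` would have width at most `m / t < m`. Since `S' = -S'`, the origin is in the relative interior.

The substantial point is that `S'` is nonempty, i.e. the infimum defining the lattice width is
attained. Otherwise infinitely many lattice directions have bounded width; their normalisations
accumulate at a unit direction `u` of width `0` in the span of the bounded lattice directions, and
simultaneous Dirichlet approximation of the coefficients of `u` yields a nonzero lattice direction
of width `< m`.
-/

open Set

noncomputable section

section WidthLE

variable {ι : Type*} [Fintype ι] {S : Set (ι → ℝ)} {x y : ι → ℝ} {C D : ℝ}

/-- Unlike `dirWidth`, this makes sense for real directions and involves no `sSup`/`sInf`, whose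
junk values on unbounded sets would otherwise have to be excluded. -/
def WidthLE (S : Set (ι → ℝ)) (x : ι → ℝ) (C : ℝ) : Prop :=
  ∀ s ∈ S, ∀ t ∈ S, x ⬝ᵥ s - x ⬝ᵥ t ≤ C

theorem WidthLE.mono (h : WidthLE S x C) (hCD : C ≤ D) : WidthLE S x D :=
  fun s hs t ht => (h s hs t ht).trans hCD

theorem WidthLE.nonneg (hne : S.Nonempty) (h : WidthLE S x C) : 0 ≤ C := by
  obtain ⟨s, hs⟩ := hne
  simpa using h s hs s hs

theorem WidthLE.add (hx : WidthLE S x C) (hy : WidthLE S y D) : WidthLE S (x + y) (C + D) := by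
  intro s hs t ht
  simp only [add_dotProduct]
  linarith [hx s hs t ht, hy s hs t ht]

theorem WidthLE.neg (h : WidthLE S x C) : WidthLE S (-x) C := by
  intro s hs t ht
  simp only [neg_dotProduct]
  linarith [h t ht s hs]

theorem WidthLE.smul_of_nonneg (h : WidthLE S x C) {a : ℝ} (ha : 0 ≤ a) :
    WidthLE S (a • x) (a * C) := by
  intro s hs t ht
  simp only [smul_dotProduct, smul_eq_mul, ← mul_sub]
  exact mul_le_mul_of_nonneg_left (h s hs t ht) ha

theorem WidthLE.of_smul {a : ℝ} (h : WidthLE S (a • x) C) (ha : 0 < a) :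
    WidthLE S x (a⁻¹ * C) := by
  simpa [smul_smul, inv_mul_cancel₀ ha.ne'] using h.smul_of_nonneg (inv_nonneg.mpr ha.le)

theorem WidthLE.smul (h : WidthLE S x C) (a : ℝ) : WidthLE S (a • x) (|a| * C) := by
  rcases le_or_gt 0 a with ha | ha
  · simpa [abs_of_nonneg ha] using h.smul_of_nonneg ha
  · simpa [abs_of_neg ha] using h.neg.smul_of_nonneg (neg_nonneg.mpr ha.le)

theorem WidthLE.sum {α : Type*} {s : Finset α} {f : α → ι → ℝ} {g : α → ℝ}
    (h : ∀ i ∈ s, WidthLE S (f i) (g i)) : WidthLE S (∑ i ∈ s, f i) (∑ i ∈ s, g i) := by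
  classical
  induction s using Finset.induction_on with
  | empty => intro s _ t _; simp
  | insert a s ha ih =>
    simp only [Finset.sum_insert ha]
    exact (h a (s.mem_insert_self a)).add (ih fun i hi => h i (Finset.mem_insert_of_mem hi))

theorem convex_setOf_widthLE (S : Set (ι → ℝ)) (C : ℝ) : Convex ℝ {x | WidthLE S x C} := by
  intro x hx y hy a b ha hb hab
  simpa [← add_mul, hab] using (hx.smul_of_nonneg ha).add (hy.smul_of_nonneg hb)

theorem isClosed_setOf_widthLE (S : Set (ι → ℝ)) (C : ℝ) : IsClosed {x | WidthLE S x C} := by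
  simp only [WidthLE, Set.ofPred_forall]
  refine isClosed_iInter fun s => isClosed_iInter fun _ => isClosed_iInter fun t =>
    isClosed_iInter fun _ => isClosed_le ?_ continuous_const
  fun_prop

theorem widthLE_zero_of_forall_pos (h : ∀ δ > 0, WidthLE S x δ) : WidthLE S x 0 :=
  fun s hs t ht => le_of_forall_pos_le_add fun δ hδ => by simpa using h δ hδ s hs t ht

end WidthLE

theorem exists_nat_pos_forall_abs_mul_sub_int_le {ι : Type*} [Fintype ι] (c : ι → ℝ) {ε : ℝ}
    (hε : 0 < ε) : ∃ q : ℕ, 0 < q ∧ ∃ p : ι → ℤ, ∀ i, |q * c i - p i| ≤ ε := by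
  -- By compactness of the cube, two of the vectors of fractional parts of `n • c` are `ε`-close.
  set f : ℕ → ι → ℝ := fun n i => Int.fract (n * c i)
  have hf : ∀ n, f n ∈ Set.univ.pi fun _ => Set.Icc (0 : ℝ) 1 := fun n i _ =>
    ⟨Int.fract_nonneg _, (Int.fract_lt_one _).le⟩
  obtain ⟨_, _, φ, hφ, hlim⟩ := (isCompact_univ_pi fun _ => isCompact_Icc).tendsto_subseq hf
  obtain ⟨N, hN⟩ := Metric.cauchySeq_iff'.mp hlim.cauchySeq ε hε
  have hclose (i : ι) : dist (f (φ (N + 1)) i) (f (φ N) i) < ε :=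
    (dist_le_pi_dist _ _ i).trans_lt (hN (N + 1) N.le_succ)
  refine ⟨φ (N + 1) - φ N, Nat.sub_pos_of_lt (hφ N.lt_succ_self),
    fun i => ⌊(φ (N + 1) : ℝ) * c i⌋ - ⌊(φ N : ℝ) * c i⌋, fun i => ?_⟩
  have hfract : ((φ (N + 1) - φ N : ℕ) : ℝ) * c i
      - ((⌊(φ (N + 1) : ℝ) * c i⌋ - ⌊(φ N : ℝ) * c i⌋ : ℤ) : ℝ) = f (φ (N + 1)) i - f (φ N) i := by
    simp only [f, Int.fract, Nat.cast_sub (hφ N.lt_succ_self).le]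
    push_cast
    ring
  rw [hfract, ← Real.dist_eq]
  exact (hclose i).le

section Lattice

variable {d : ℕ} {S : Set (Fin d → ℝ)} {v : Fin d → ℤ} {C : ℝ}

theorem ic_zero : ic (0 : Fin d → ℤ) = 0 := by
  ext i; simp [ic]

theorem ic_neg (v : Fin d → ℤ) : ic (-v) = -ic v := by
  ext i; simp [ic]

theorem ic_sum_zsmul {α : Type*} (s : Finset α) (p : α → ℤ) (b : α → Fin d → ℤ) :
    ic (∑ i ∈ s, p i • b i) = ∑ i ∈ s, (p i : ℝ) • ic (b i) := by
  ext j; simp [ic]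

theorem norm_ic (v : Fin d → ℤ) : ‖ic v‖ = ‖v‖ := rfl

theorem finite_setOf_norm_le (R : ℝ) : {v : Fin d → ℤ | ‖v‖ ≤ R}.Finite := by
  simpa [Metric.closedBall] using (isCompact_closedBall (0 : Fin d → ℤ) R).finite_of_discrete

theorem ieval_eq_dotProduct (v : Fin d → ℤ) (x : Fin d → ℝ) : ieval v x = ic v ⬝ᵥ x := rfl

theorem widthLE_dirWidth (hb : IsBddDir S v) : WidthLE S (ic v) (dirWidth S v) := by
  intro s hs t ht
  have hs' : ieval v s ≤ sSup (ieval v '' S) := le_csSup hb.1 ⟨s, hs, rfl⟩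
  have ht' : sInf (ieval v '' S) ≤ ieval v t := csInf_le hb.2 ⟨t, ht, rfl⟩
  show ieval v s - ieval v t ≤ sSup (ieval v '' S) - sInf (ieval v '' S)
  linarith

theorem widthLE_ic_iff (hne : S.Nonempty) :
    WidthLE S (ic v) C ↔ IsBddDir S v ∧ dirWidth S v ≤ C := by
  refine ⟨fun h => ?_, fun ⟨hb, hC⟩ => (widthLE_dirWidth hb).mono hC⟩
  replace h : ∀ s ∈ S, ∀ t ∈ S, ieval v s - ieval v t ≤ C := h
  obtain ⟨s₀, hs₀⟩ := hne
  have hne' : (ieval v '' S).Nonempty := ⟨_, s₀, hs₀, rfl⟩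
  have hb : IsBddDir S v :=
    ⟨⟨ieval v s₀ + C, by rintro _ ⟨s, hs, rfl⟩; linarith [h s hs s₀ hs₀]⟩,
     ⟨ieval v s₀ - C, by rintro _ ⟨s, hs, rfl⟩; linarith [h s₀ hs₀ s hs]⟩⟩
  refine ⟨hb, ?_⟩
  have hsup : sSup (ieval v '' S) ≤ sInf (ieval v '' S) + C :=
    csSup_le hne' fun _ ⟨s, hs, hsv⟩ => hsv ▸ by
      have : ieval v s - C ≤ sInf (ieval v '' S) :=
        le_csInf hne' fun _ ⟨t, ht, htv⟩ => htv ▸ by linarith [h s hs t ht]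
      linarith
  rw [dirWidth]
  linarith

theorem image_ieval_neg : ieval (-v) '' S = -(ieval v '' S) := by
  rw [← Set.image_neg_eq_neg, Set.image_image]
  congr 1
  funext x
  simp [ieval_eq_dotProduct, ic_neg]

theorem isBddDir_neg_iff : IsBddDir S (-v) ↔ IsBddDir S v := by
  rw [IsBddDir, IsBddDir, image_ieval_neg, bddAbove_neg, bddBelow_neg, and_comm]

theorem dirWidth_neg : dirWidth S (-v) = dirWidth S v := by
  rw [dirWidth, dirWidth, image_ieval_neg, Real.sSup_neg, Real.sInf_neg]
  ring

end Lattice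

section LatticeWidth

variable {d : ℕ} {S : Set (Fin d → ℝ)} {v : Fin d → ℤ} {m c : ℝ}

theorem latticeWidth_le_dirWidth (hv : v ≠ 0) (hb : IsBddDir S v) :
    latticeWidth S ≤ dirWidth S v :=
  iInf₂_le v ⟨hv, hb⟩

theorem exists_latticeWidth_eq_coe (hpos : 0 < latticeWidth S) (hfin : latticeWidth S < ⊤) :
    ∃ m : ℝ, 0 < m ∧ latticeWidth S = m := by
  lift latticeWidth S to ℝ using ⟨hfin.ne, hpos.ne_bot⟩ with m
  exact ⟨m, EReal.coe_pos.mp hpos, rfl⟩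

theorem exists_ne_zero_isBddDir (hfin : latticeWidth S < ⊤) : ∃ v, v ≠ 0 ∧ IsBddDir S v := by
  by_contra! h
  exact hfin.ne (top_le_iff.mp (le_iInf₂ fun v hv => absurd hv.2 (h v hv.1)))

theorem neg_mem_widthDirs (hv : v ∈ widthDirs S) : -v ∈ widthDirs S :=
  ⟨neg_ne_zero.mpr hv.1, isBddDir_neg_iff.mpr hv.2.1, by rw [dirWidth_neg]; exact hv.2.2⟩

theorem neg_image_ic_widthDirs : -(ic '' widthDirs S) = ic '' widthDirs S := by
  ext x
  simp only [Set.mem_neg, Set.mem_image]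
  constructor
  · rintro ⟨v, hv, hvx⟩
    exact ⟨-v, neg_mem_widthDirs hv, by rw [ic_neg, hvx, neg_neg]⟩
  · rintro ⟨v, hv, rfl⟩
    exact ⟨-v, neg_mem_widthDirs hv, ic_neg v⟩

theorem not_widthLE_of_lt (hne : S.Nonempty) (hm : latticeWidth S = m) (hv : v ≠ 0)
    (hc : c < m) : ¬ WidthLE S (ic v) c := by
  rw [widthLE_ic_iff hne]
  rintro ⟨hb, hvc⟩
  have := hm ▸ latticeWidth_le_dirWidth hv hb
  exact (EReal.coe_le_coe_iff.mp this).not_gt (hvc.trans_lt hc)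

theorem mem_widthDirs_of_widthLE (hne : S.Nonempty) (hm : latticeWidth S = m) (hv : v ≠ 0)
    (h : WidthLE S (ic v) m) : v ∈ widthDirs S := by
  obtain ⟨hb, hvm⟩ := (widthLE_ic_iff hne).mp h
  have := hm ▸ latticeWidth_le_dirWidth hv hb
  exact ⟨hv, hb, by rw [hm, le_antisymm hvm (EReal.coe_le_coe_iff.mp this)]⟩

theorem widthLE_of_mem_convexHull (hm : latticeWidth S = m) {x : Fin d → ℝ}
    (hx : x ∈ convexHull ℝ (ic '' widthDirs S)) : WidthLE S x m := by
  refine convexHull_min ?_ (convex_setOf_widthLE S m) hx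
  rintro _ ⟨v, hv, rfl⟩
  have := hv.2.2
  rw [hm, EReal.coe_eq_coe_iff] at this
  exact this ▸ widthLE_dirWidth hv.2.1

end LatticeWidth

section Attained

open Filter Topology Submodule

variable {d : ℕ} {S : Set (Fin d → ℝ)} {C δ : ℝ}

theorem exists_norm_eq_one_widthLE_zero_of_infinite
    (hinf : {v : Fin d → ℤ | WidthLE S (ic v) C}.Infinite) :
    ∃ u : Fin d → ℝ, ‖u‖ = 1 ∧ u ∈ span ℝ (ic '' {v | ∃ C, WidthLE S (ic v) C}) ∧
      WidthLE S u 0 := by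
  have hunbdd (n : ℕ) : ∃ v, WidthLE S (ic v) C ∧ (n : ℝ) < ‖ic v‖ := by
    obtain ⟨v, hv, hvn⟩ := (hinf.sdiff (finite_setOf_norm_le n)).nonempty
    exact ⟨v, hv, norm_ic v ▸ lt_of_not_ge hvn⟩
  choose v hvC hvn using hunbdd
  have hpos (n : ℕ) : 0 < ‖ic (v n)‖ := (Nat.cast_nonneg n).trans_lt (hvn n)
  have hsphere (n : ℕ) : ‖ic (v n)‖⁻¹ • ic (v n) ∈ Metric.sphere 0 1 := by
    simp [norm_smul, (hpos n).ne']
  obtain ⟨u, hu, φ, hφ, hlim⟩ := (isCompact_sphere 0 1).tendsto_subseq hsphere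
  refine ⟨u, mem_sphere_zero_iff_norm.mp hu, ?_, ?_⟩
  · refine (closed_of_finiteDimensional _).mem_of_tendsto hlim (Eventually.of_forall fun n => ?_)
    exact smul_mem _ _ (subset_span ⟨v (φ n), ⟨C, hvC _⟩, rfl⟩)
  · have hscale : Tendsto (fun n => ‖ic (v (φ n))‖⁻¹ * C) atTop (𝓝 0) := by
      have hnorm : Tendsto (fun n => ‖ic (v (φ n))‖) atTop atTop :=
        tendsto_atTop_mono (fun n => (Nat.cast_le.mpr (hφ.id_le n)).trans (hvn (φ n)).le)
          tendsto_natCast_atTop_atTop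
      simpa using hnorm.inv_tendsto_atTop.mul_const C
    refine widthLE_zero_of_forall_pos fun δ hδ =>
      (isClosed_setOf_widthLE S δ).mem_of_tendsto hlim ?_
    filter_upwards [hscale.eventually (eventually_le_nhds hδ)] with n hn
    exact ((hvC (φ n)).smul_of_nonneg (inv_nonneg.mpr (hpos _).le)).mono hn

theorem exists_ne_zero_widthLE_of_widthLE_zero (hne : S.Nonempty) {u : Fin d → ℝ} (hu : u ≠ 0)
    (hspan : u ∈ span ℝ (ic '' {v | ∃ C, WidthLE S (ic v) C})) (hu0 : WidthLE S u 0)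
    (hδ : 0 < δ) : ∃ v ≠ 0, WidthLE S (ic v) δ := by
  obtain ⟨t, ht, c, hc⟩ := (mem_span_image_iff_exists_fun ℝ).mp hspan
  choose C hC using fun i : t => ht i.2
  obtain ⟨ε₁, hε₁, hwidth⟩ := exists_pos_mul_lt hδ (∑ i, C i)
  obtain ⟨ε₂, hε₂, hnorm⟩ := exists_pos_mul_lt (norm_pos_iff.mpr hu) (∑ i : t, ‖ic (i : Fin d → ℤ)‖)
  obtain ⟨q, hq, p, hp⟩ := exists_nat_pos_forall_abs_mul_sub_int_le c (lt_min hε₁ hε₂)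
  have herr (i : t) : |(p i : ℝ) - q * c i| ≤ ε₁ ∧ |(p i : ℝ) - q * c i| ≤ ε₂ := by
    rw [abs_sub_comm]; exact le_min_iff.mp (hp i)
  -- The lattice vector `∑ p i • i` differs from `q • u`, of width `0`, by an error `e` that is
  -- small both in width and in norm.
  set e : Fin d → ℝ := ∑ i, ((p i : ℝ) - q * c i) • ic i
  have hdecomp : ic (∑ i, p i • (i : Fin d → ℤ)) = (q : ℝ) • u + e := by
    simp only [ic_sum_zsmul, e, ← hc, Finset.smul_sum, smul_smul, ← Finset.sum_add_distrib,
      ← add_smul, add_sub_cancel]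
  have he : ‖e‖ ≤ ε₂ * ∑ i : t, ‖ic (i : Fin d → ℤ)‖ := by
    refine (norm_sum_le _ _).trans ?_
    rw [Finset.mul_sum]
    exact Finset.sum_le_sum fun i _ => by
      rw [norm_smul, Real.norm_eq_abs]; gcongr; exact (herr i).2
  refine ⟨∑ i, p i • (i : Fin d → ℤ), fun hzero => ?_, ?_⟩
  · have hqu : (q : ℝ) • u = -e := by
      rw [← sub_eq_zero, sub_neg_eq_add, ← hdecomp, hzero, ic_zero]
    have : ‖u‖ ≤ ‖(q : ℝ) • u‖ := by
      rw [norm_smul, Real.norm_natCast]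
      exact le_mul_of_one_le_left (norm_nonneg u) (Nat.one_le_cast.mpr hq)
    rw [hqu, norm_neg] at this
    linarith
  · rw [hdecomp]
    refine ((hu0.smul_of_nonneg q.cast_nonneg).add (WidthLE.sum fun i _ => (hC i).smul _)).mono ?_
    rw [mul_zero, zero_add]
    calc ∑ i, |(p i : ℝ) - q * c i| * C i ≤ ∑ i, ε₁ * C i :=
          Finset.sum_le_sum fun i _ => by gcongr; exacts [(hC i).nonneg hne, (herr i).1]
      _ ≤ δ := by rw [← Finset.mul_sum]; linarith

theorem finite_setOf_widthLE (hne : S.Nonempty) (hδ : 0 < δ)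
    (hgap : ∀ v : Fin d → ℤ, v ≠ 0 → ¬ WidthLE S (ic v) δ) (C : ℝ) :
    {v : Fin d → ℤ | WidthLE S (ic v) C}.Finite := by
  by_contra hinf
  obtain ⟨u, hu, hspan, hu0⟩ := exists_norm_eq_one_widthLE_zero_of_infinite hinf
  obtain ⟨v, hv, hvδ⟩ :=
    exists_ne_zero_widthLE_of_widthLE_zero hne (norm_ne_zero_iff.mp (hu ▸ one_ne_zero)) hspan hu0 hδ
  exact hgap v hv hvδ

theorem widthDirs_nonempty (hne : S.Nonempty) (hpos : 0 < latticeWidth S)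
    (hfin : latticeWidth S < ⊤) : (widthDirs S).Nonempty := by
  obtain ⟨m, hm0, hm⟩ := exists_latticeWidth_eq_coe hpos hfin
  obtain ⟨v₀, hv₀, hb₀⟩ := exists_ne_zero_isBddDir hfin
  set W := {v : Fin d → ℤ | v ≠ 0 ∧ WidthLE S (ic v) (dirWidth S v₀)}
  have hW : W.Finite :=
    (finite_setOf_widthLE hne (half_pos hm0) (fun v hv => not_widthLE_of_lt hne hm hv
      (half_lt_self hm0)) _).subset fun v hv => hv.2
  obtain ⟨w, ⟨hw, hwW⟩, hmin⟩ :=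
    Set.exists_min_image W (dirWidth S) hW ⟨v₀, hv₀, widthLE_dirWidth hb₀⟩
  have hbw := ((widthLE_ic_iff hne).mp hwW).1
  refine ⟨w, hw, hbw, le_antisymm (le_iInf₂ fun v ⟨hv, hb⟩ => ?_) (latticeWidth_le_dirWidth hw hbw)⟩
  rcases le_total (dirWidth S v) (dirWidth S v₀) with h | h
  · exact EReal.coe_le_coe_iff.mpr (hmin v ⟨hv, (widthLE_dirWidth hb).mono h⟩)
  · exact EReal.coe_le_coe_iff.mpr ((hmin v₀ ⟨hv₀, widthLE_dirWidth hb₀⟩).trans h)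

end Attained

section IntrinsicInterior

theorem mem_intrinsicInterior_iff_dist {𝕜 V P : Type*} [Ring 𝕜] [AddCommGroup V] [Module 𝕜 V]
    [PseudoMetricSpace P] [AddTorsor V P] {s : Set P} {x : P} :
    x ∈ intrinsicInterior 𝕜 s ↔
      x ∈ affineSpan 𝕜 s ∧ ∃ ε > 0, ∀ z ∈ affineSpan 𝕜 s, dist z x < ε → z ∈ s := by
  constructor
  · rintro ⟨y, hy, rfl⟩
    obtain ⟨ε, hε, hball⟩ := Metric.mem_nhds_iff.mp (mem_interior_iff_mem_nhds.mp hy)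
    exact ⟨y.2, ε, hε, fun z hz hzy => hball (show dist (⟨z, hz⟩ : affineSpan 𝕜 s) y < ε from hzy)⟩
  · rintro ⟨hx, ε, hε, hball⟩
    refine ⟨⟨x, hx⟩, mem_interior_iff_mem_nhds.mpr (Metric.mem_nhds_iff.mpr ?_), rfl⟩
    exact ⟨ε, hε, fun z hz => hball z z.2 hz⟩

variable {E : Type*} [NormedAddCommGroup E] [NormedSpace ℝ E] {K : Set E}

theorem zero_mem_intrinsicInterior_of_neg_eq [FiniteDimensional ℝ E] (hK : Convex ℝ K)
    (hne : K.Nonempty) (hsymm : -K = K) : (0 : E) ∈ intrinsicInterior ℝ K := by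
  obtain ⟨y, hy⟩ := hne.intrinsicInterior hK
  have hyK := intrinsicInterior_subset hy
  have hmid {a b : E} (ha : a ∈ K) (hb : b ∈ K) : (1 / 2 : ℝ) • (a + b) ∈ K := by
    simpa [smul_add] using hK ha hb (by norm_num) (by norm_num) (add_halves (1 : ℝ))
  have h0 : (0 : E) ∈ K := by
    simpa using hmid hyK (show -y ∈ K from hsymm ▸ Set.neg_mem_neg.mpr hyK)
  rw [mem_intrinsicInterior_iff_dist] at hy ⊢
  obtain ⟨hyA, ε, hε, hball⟩ := hy
  refine ⟨subset_affineSpan ℝ K h0, ε, hε, fun z hz hzε => ?_⟩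
  have hdir : z ∈ (affineSpan ℝ K).direction := by
    simpa using AffineSubspace.vsub_mem_direction hz (subset_affineSpan ℝ K h0)
  rw [dist_zero_right] at hzε
  have hadd : y + z ∈ K := hball _ (by simpa [add_comm] using
    AffineSubspace.vadd_mem_of_mem_direction hdir hyA) (by simpa [dist_eq_norm] using hzε)
  have hsub : z - y ∈ K := by
    rw [← hsymm, Set.mem_neg, neg_sub]
    exact hball _ (by simpa [sub_eq_add_neg, add_comm] using
      AffineSubspace.vadd_mem_of_mem_direction (neg_mem hdir) hyA)
      (by simpa [dist_eq_norm] using hzε)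
  convert hmid hadd hsub using 1
  module

theorem exists_one_lt_smul_mem_of_mem_intrinsicInterior (h0 : (0 : E) ∈ K) {x : E}
    (hx : x ∈ intrinsicInterior ℝ K) : ∃ t : ℝ, 1 < t ∧ t • x ∈ K := by
  rw [mem_intrinsicInterior_iff_dist] at hx
  obtain ⟨hxA, ε, hε, hball⟩ := hx
  obtain ⟨t, ht, htx⟩ := exists_pos_mul_lt hε ‖x‖
  have hdir : x ∈ (affineSpan ℝ K).direction := by
    simpa using AffineSubspace.vsub_mem_direction hxA (subset_affineSpan ℝ K h0)
  refine ⟨1 + t, lt_add_of_pos_right 1 ht, hball _ ?_ ?_⟩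
  · simpa [add_smul, add_comm] using
      AffineSubspace.vadd_mem_of_mem_direction (Submodule.smul_mem _ t hdir) hxA
  · rw [dist_eq_norm, add_smul, one_smul, add_sub_cancel_left, norm_smul, Real.norm_of_nonneg ht.le]
    linarith

end IntrinsicInterior

theorem ic_notMem_intrinsicInterior_convexHull {d : ℕ} {S : Set (Fin d → ℝ)} {v : Fin d → ℤ}
    {m : ℝ} (hne : S.Nonempty) (hm0 : 0 < m) (hm : latticeWidth S = m) (hv : v ∈ widthDirs S)
    (h0 : (0 : Fin d → ℝ) ∈ convexHull ℝ (ic '' widthDirs S)) :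
    ic v ∉ intrinsicInterior ℝ (convexHull ℝ (ic '' widthDirs S)) := by
  intro hint
  obtain ⟨t, ht, htv⟩ := exists_one_lt_smul_mem_of_mem_intrinsicInterior h0 hint
  have ht0 : 0 < t := zero_lt_one.trans ht
  exact not_widthLE_of_lt hne hm hv.1 ((inv_mul_lt_iff₀ ht0).mpr (lt_mul_of_one_lt_left hm0 ht))
    ((widthLE_of_mem_convexHull hm htv).of_smul ht0)

/-- For `S ⊆ ℝ^d` with `0 < width(S) < ∞`, the convex hull of the set `S'` of lattice
    width directions is nonempty, convex and centrally symmetric, its relative interior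
    contains no lattice point other than the origin, and the lattice points of
    `conv S'` outside its relative interior are precisely the elements of `S'`. -/
theorem convexHull_widthDirs_properties {d : ℕ} (S : Set (Fin d → ℝ))
    (hne : S.Nonempty) (hpos : (0 : EReal) < latticeWidth S)
    (hfin : latticeWidth S < ⊤) :
    (convexHull ℝ (ic '' widthDirs S)).Nonempty ∧
    Convex ℝ (convexHull ℝ (ic '' widthDirs S)) ∧
    convexHull ℝ (ic '' widthDirs S) = -(convexHull ℝ (ic '' widthDirs S)) ∧
    {v : Fin d → ℤ | ic v ∈ intrinsicInterior ℝ (convexHull ℝ (ic '' widthDirs S))}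
      ⊆ {0} ∧
    {v : Fin d → ℤ | ic v ∈ convexHull ℝ (ic '' widthDirs S) ∧
        ic v ∉ intrinsicInterior ℝ (convexHull ℝ (ic '' widthDirs S))} = widthDirs S := by
  obtain ⟨m, hm0, hm⟩ := exists_latticeWidth_eq_coe hpos hfin
  set K := convexHull ℝ (ic '' widthDirs S)
  have hKconv : Convex ℝ K := convex_convexHull ℝ _
  have hKne : K.Nonempty := ((widthDirs_nonempty hne hpos hfin).image ic).convexHull
  have hsymm : -K = K := by rw [← convexHull_neg, neg_image_ic_widthDirs]
  have h0 : (0 : Fin d → ℝ) ∈ intrinsicInterior ℝ K :=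
    zero_mem_intrinsicInterior_of_neg_eq hKconv hKne hsymm
  have hlattice {v : Fin d → ℤ} (hv : v ≠ 0) (hvK : ic v ∈ K) : v ∈ widthDirs S :=
    mem_widthDirs_of_widthLE hne hm hv (widthLE_of_mem_convexHull hm hvK)
  have hboundary {v : Fin d → ℤ} (hv : v ∈ widthDirs S) : ic v ∉ intrinsicInterior ℝ K :=
    ic_notMem_intrinsicInterior_convexHull hne hm0 hm hv (intrinsicInterior_subset h0)
  refine ⟨hKne, hKconv, hsymm.symm, fun v hv => ?_,
    Set.ext fun v => ⟨fun ⟨hvK, hv⟩ => ?_, fun hv => ?_⟩⟩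
  · by_contra hv0
    exact hboundary (hlattice hv0 (intrinsicInterior_subset hv)) hv
  · exact hlattice (by rintro rfl; exact hv (ic_zero ▸ h0)) hvK
  · exact ⟨subset_convexHull ℝ _ ⟨v, hv, rfl⟩, hboundary hv⟩
end
end

section
/- Let S ⊆ ℝ^d satisfy 0 < width(S) < ∞, and let v be a nonzero lattice point of (ℤ^d)* lying in the convex hull of S'. Then width(S,v) = width(S), i.e., v ∈ S'. -/
open Set

noncomputable section

/-- For `S ⊆ ℝ^d` with `0 < width(S) < ∞`, every nonzero lattice point of `(ℤ^d)*`
    lying in the convex hull of `S'` is itself a lattice width direction of `S`. -/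
theorem mem_widthDirs_of_mem_convexHull {d : ℕ} (S : Set (Fin d → ℝ))
    (hne : S.Nonempty) (hpos : (0 : EReal) < latticeWidth S)
    (hfin : latticeWidth S < ⊤) (v : Fin d → ℤ) (hv : v ≠ 0)
    (hmem : ic v ∈ convexHull ℝ (ic '' widthDirs S)) :
    v ∈ widthDirs S := by

  classical
  rw [convexHull_eq] at hmem
  obtain ⟨ι, t, lam, z, hlam0, hlam1, hzmem, hcm⟩ := hmem
  rw [Finset.centerMass_eq_of_sum_1 _ _ hlam1] at hcm
  have hex : ∀ i, ∃ w : Fin d → ℤ, i ∈ t → w ∈ widthDirs S ∧ ic w = z i := by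
    intro i
    by_cases hi : i ∈ t
    · obtain ⟨w, hw, hwz⟩ := hzmem i hi
      exact ⟨w, fun _ => ⟨hw, hwz⟩⟩
    · exact ⟨0, fun h => absurd h hi⟩
  choose u hu using hex
  have hcm' : ic v = ∑ i ∈ t, lam i • ic (u i) := by
    rw [← hcm]
    exact (Finset.sum_congr rfl fun i hi => by rw [(hu i hi).2]).symm
  have htne : t.Nonempty := by
    rcases Finset.eq_empty_or_nonempty t with h | h
    · simp [h] at hlam1
    · exact h
  obtain ⟨i₀, hi₀⟩ := htne
  set W := dirWidth S (u i₀) with hW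
  have hWlat : ((W : ℝ) : EReal) = latticeWidth S := (hu i₀ hi₀).1.2.2
  have hWall : ∀ i ∈ t, dirWidth S (u i) = W := by
    intro i hi
    have h1 := (hu i hi).1.2.2
    have := h1.trans hWlat.symm
    exact_mod_cast this
  -- pointwise identity
  have hpt : ∀ x : Fin d → ℝ, ieval v x = ∑ i ∈ t, lam i * ieval (u i) x := by
    intro x
    have hic : ∀ j, (v j : ℝ) = ∑ i ∈ t, lam i * (u i j : ℝ) := by
      intro j
      have h := congrFun hcm' j
      simpa [ic, Finset.sum_apply, smul_eq_mul] using h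
    simp only [ieval]
    calc ∑ j, (v j : ℝ) * x j = ∑ j, (∑ i ∈ t, lam i * (u i j : ℝ)) * x j := by
          exact Finset.sum_congr rfl fun j _ => by rw [hic j]
      _ = ∑ j, ∑ i ∈ t, lam i * (u i j : ℝ) * x j := by
          exact Finset.sum_congr rfl fun j _ => Finset.sum_mul ..
      _ = ∑ i ∈ t, ∑ j, lam i * (u i j : ℝ) * x j := Finset.sum_comm
      _ = ∑ i ∈ t, lam i * ∑ j, (u i j : ℝ) * x j := by
          refine Finset.sum_congr rfl fun i _ => ?_
          rw [Finset.mul_sum]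
          exact Finset.sum_congr rfl fun j _ => by ring
  set M : ι → ℝ := fun i => sSup (ieval (u i) '' S) with hM
  set m : ι → ℝ := fun i => sInf (ieval (u i) '' S) with hm
  have hub : ∀ x ∈ S, ieval v x ≤ ∑ i ∈ t, lam i * M i := by
    intro x hx
    rw [hpt x]
    refine Finset.sum_le_sum fun i hi => ?_
    exact mul_le_mul_of_nonneg_left
      (le_csSup (hu i hi).1.2.1.1 ⟨x, hx, rfl⟩) (hlam0 i hi)
  have hlb : ∀ x ∈ S, ∑ i ∈ t, lam i * m i ≤ ieval v x := by
    intro x hx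
    rw [hpt x]
    refine Finset.sum_le_sum fun i hi => ?_
    exact mul_le_mul_of_nonneg_left
      (csInf_le (hu i hi).1.2.1.2 ⟨x, hx, rfl⟩) (hlam0 i hi)
  have hbddA : BddAbove (ieval v '' S) := ⟨_, fun y ⟨x, hx, hxy⟩ => hxy ▸ hub x hx⟩
  have hbddB : BddBelow (ieval v '' S) := ⟨_, fun y ⟨x, hx, hxy⟩ => hxy ▸ hlb x hx⟩
  have hSne : (ieval v '' S).Nonempty := hne.image _
  have hsup : sSup (ieval v '' S) ≤ ∑ i ∈ t, lam i * M i :=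
    csSup_le hSne (fun y ⟨x, hx, hxy⟩ => hxy ▸ hub x hx)
  have hinf : ∑ i ∈ t, lam i * m i ≤ sInf (ieval v '' S) :=
    le_csInf hSne (fun y ⟨x, hx, hxy⟩ => hxy ▸ hlb x hx)
  have hdw : dirWidth S v ≤ W := by
    have h1 : dirWidth S v ≤ (∑ i ∈ t, lam i * M i) - ∑ i ∈ t, lam i * m i :=
      sub_le_sub hsup hinf
    have h2 : (∑ i ∈ t, lam i * M i) - ∑ i ∈ t, lam i * m i
        = ∑ i ∈ t, lam i * (M i - m i) := by
      rw [← Finset.sum_sub_distrib]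
      exact Finset.sum_congr rfl fun i _ => by ring
    have h3 : ∑ i ∈ t, lam i * (M i - m i) = W := by
      have : ∀ i ∈ t, lam i * (M i - m i) = lam i * W := by
        intro i hi
        rw [show M i - m i = dirWidth S (u i) from rfl, hWall i hi]
      rw [Finset.sum_congr rfl this, ← Finset.sum_mul, hlam1, one_mul]
    linarith [h1, h2 ▸ h1, h3 ▸ (h2 ▸ h1)]
  have hmem' : v ∈ {v : Fin d → ℤ | v ≠ 0 ∧ IsBddDir S v} := ⟨hv, hbddA, hbddB⟩
  have hle : latticeWidth S ≤ ((dirWidth S v : ℝ) : EReal) := iInf₂_le v hmem'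
  have hge : ((dirWidth S v : ℝ) : EReal) ≤ latticeWidth S := by
    rw [← hWlat]
    exact_mod_cast hdw
  exact ⟨hv, ⟨hbddA, hbddB⟩, le_antisymm hge hle⟩
end
end

section
/- Let K ⊆ ℝ^d be a centrally-symmetric convex set with K°_ℤ = {0}. Then every translate K + 2α with α ∈ K_ℤ is contained in 3K, and the relative interiors of the sets K + 2α, for distinct α ∈ K_ℤ, are pairwise disjoint. -/
open Set
open scoped Pointwise

noncomputable section

attribute [local instance] AffineSubspace.toNormedAddTorsor

/-- Midpoint of two points of the intrinsic interior of a convex set lies in it. -/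
lemma midpoint_mem_intrinsicInterior' {E : Type*} [NormedAddCommGroup E] [NormedSpace ℝ E]
    {s : Set E} (hs : Convex ℝ s)
    {x y : E} (hx : x ∈ intrinsicInterior ℝ s) (hy : y ∈ intrinsicInterior ℝ s) :
    midpoint ℝ x y ∈ intrinsicInterior ℝ s := by
  obtain ⟨x', hx', rfl⟩ := hx
  obtain ⟨y', hy', rfl⟩ := hy
  haveI : Nonempty (affineSpan ℝ s) := ⟨x'⟩
  let h := (AffineIsometryEquiv.constVSub ℝ x').toHomeomorph
  let T : Set (affineSpan ℝ s) := ((↑) ⁻¹' s)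
  have hsymmcoe : ∀ v : (affineSpan ℝ s).direction,
      ((h.symm v : affineSpan ℝ s) : E) = (x' : E) - (v : E) := by
    intro v
    show (((AffineEquiv.constVSub ℝ x').symm v : affineSpan ℝ s) : E) = _
    rw [AffineEquiv.coe_constVSub_symm]
    simp [sub_eq_neg_add]
  have himg : h '' interior T = interior (h '' T) := h.image_interior T
  have hT' : h '' T = (fun v : (affineSpan ℝ s).direction => (x' : E) - (v : E)) ⁻¹' s := by
    rw [← Homeomorph.preimage_symm]
    ext v
    simp only [mem_preimage, T, hsymmcoe v]
  have hconvT' : Convex ℝ ((fun v : (affineSpan ℝ s).direction => (x' : E) - (v : E)) ⁻¹' s) := by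
    intro u hu v hv a b ha hb hab
    simp only [mem_preimage] at hu hv ⊢
    have heq : (x' : E) - ((a • u + b • v : (affineSpan ℝ s).direction) : E)
        = a • ((x' : E) - (u : E)) + b • ((x' : E) - (v : E)) := by
      push_cast
      rw [smul_sub, smul_sub, ← add_sub_add_comm, ← add_smul, hab, one_smul]
    rw [heq]
    exact hs hu hv ha hb hab
  have h0 : (0 : (affineSpan ℝ s).direction) ∈ interior (h '' T) := by
    rw [← himg]
    exact ⟨x', hx', by simp [h]⟩
  have hu : (x' -ᵥ y' : (affineSpan ℝ s).direction) ∈ interior (h '' T) := by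
    rw [← himg]
    exact ⟨y', hy', by simp [h]⟩
  have hm : ((2⁻¹ : ℝ) • (x' -ᵥ y') : (affineSpan ℝ s).direction) ∈ interior (h '' T) := by
    have := (hconvT'.interior (𝕜 := ℝ)) (hT' ▸ hu) (hT' ▸ h0)
      (by norm_num : (0:ℝ) ≤ 2⁻¹) (by norm_num : (0:ℝ) ≤ 2⁻¹) (by norm_num)
    rw [← hT'] at this
    simpa using this
  rw [← himg] at hm
  obtain ⟨m, hmT, hme⟩ := hm
  refine ⟨m, hmT, ?_⟩
  have hmc : ((m : affineSpan ℝ s) : E)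
      = ((h.symm ((2⁻¹ : ℝ) • (x' -ᵥ y')) : affineSpan ℝ s) : E) := by
    rw [← hme]; simp
  rw [hmc, hsymmcoe]
  have hcast : (((2⁻¹ : ℝ) • (x' -ᵥ y') : (affineSpan ℝ s).direction) : E)
      = (2⁻¹:ℝ) • ((x':E) - (y':E)) := by
    rw [SetLike.val_smul, AffineSubspace.coe_vsub, vsub_eq_sub]
  rw [hcast, midpoint_eq_smul_add, invOf_eq_inv]
  module

/-- Intrinsic interior commutes with translation. -/
lemma intrinsicInterior_translate {E : Type*} [NormedAddCommGroup E] [NormedSpace ℝ E]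
    (s : Set E) (v : E) :
    intrinsicInterior ℝ ((fun p => p + v) '' s) = (fun p => p + v) '' intrinsicInterior ℝ s := by
  have hfun : (fun p : E => p + v) = ⇑(AffineIsometryEquiv.constVAdd ℝ E v).toAffineIsometry := by
    funext p
    simp [add_comm]
  rw [hfun]
  exact AffineIsometry.image_intrinsicInterior _ _

/-- Intrinsic interior of a symmetric set is symmetric. -/
lemma neg_mem_intrinsicInterior {E : Type*} [NormedAddCommGroup E] [NormedSpace ℝ E]
    {s : Set E} (hsym : s = -s) {x : E} (hx : x ∈ intrinsicInterior ℝ s) :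
    -x ∈ intrinsicInterior ℝ s := by
  have hfun : (fun p : E => -p)
      = ⇑(LinearIsometryEquiv.neg ℝ (E := E)).toAffineIsometryEquiv.toAffineIsometry := by
    funext p; simp
  have himg : intrinsicInterior ℝ ((fun p : E => -p) '' s)
      = (fun p : E => -p) '' intrinsicInterior ℝ s := by
    rw [hfun]
    exact AffineIsometry.image_intrinsicInterior _ _
  have hss : (fun p : E => -p) '' s = s := by
    rw [Set.image_neg_eq_neg, ← hsym]
  rw [hss] at himg
  rw [himg]
  exact ⟨x, hx, rfl⟩

/-- For a centrally-symmetric convex set `K` with `K°_ℤ = {0}`, each translate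
    `K + 2α` with `α ∈ K_ℤ` is contained in `3K`, and the relative interiors of
    these translates are pairwise disjoint. -/
theorem translates_packing {d : ℕ} (K : Set (Fin d → ℝ))
    (hconv : Convex ℝ K) (hsym : K = -K)
    (hint : relintLatticePts K = {0}) :
    (∀ α ∈ latticePts K, (fun p => p + (2 : ℝ) • ic α) '' K ⊆ (3 : ℝ) • K) ∧
    (∀ α ∈ latticePts K, ∀ β ∈ latticePts K, α ≠ β →
      Disjoint (intrinsicInterior ℝ ((fun p => p + (2 : ℝ) • ic α) '' K))
        (intrinsicInterior ℝ ((fun p => p + (2 : ℝ) • ic β) '' K))) := by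
  constructor
  · rintro α hα y ⟨x, hx, rfl⟩
    refine ⟨(1/3 : ℝ) • x + (2/3 : ℝ) • ic α, ?_, ?_⟩
    · exact hconv hx hα (by norm_num) (by norm_num) (by norm_num)
    · show (3:ℝ) • ((1/3 : ℝ) • x + (2/3 : ℝ) • ic α) = x + (2:ℝ) • ic α
      module
  · intro α hα β hβ hne
    rw [Set.disjoint_left]
    intro z hzα hzβ
    rw [intrinsicInterior_translate] at hzα hzβ
    obtain ⟨p, hp, hpz⟩ := hzα
    obtain ⟨q, hq, hqz⟩ := hzβ
    have h1 : p + (2:ℝ) • ic α = q + (2:ℝ) • ic β := hpz.trans hqz.symm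
    have hnegp : -p ∈ intrinsicInterior ℝ K := neg_mem_intrinsicInterior hsym hp
    have hmid : midpoint ℝ (-p) q ∈ intrinsicInterior ℝ K :=
      midpoint_mem_intrinsicInterior' hconv hnegp hq
    have hmideq : midpoint ℝ (-p) q = ic α - ic β := by
      rw [midpoint_eq_smul_add, invOf_eq_inv]
      linear_combination (norm := module) (-2⁻¹ : ℝ) • h1
    have hicsub : ic (α - β) = ic α - ic β := by
      funext i
      simp [ic]
    have hmem : α - β ∈ relintLatticePts K := by
      show ic (α - β) ∈ intrinsicInterior ℝ K
      rw [hicsub, ← hmideq]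
      exact hmid
    rw [hint, Set.mem_singleton_iff, sub_eq_zero] at hmem
    exact hne hmem
end
end

section
/- Let K ⊆ ℝ^d be a centrally-symmetric convex set of dimension d' with K°_ℤ = {0} and with finite positive d'-dimensional volume Vol(K). Then |K_ℤ| · Vol(K) ≤ Vol(3K) = 3^{d'} · Vol(K); in particular |K_ℤ| ≤ 3^{d'}. -/
/-!
For distinct lattice points `x ≠ y` of `K`, the translates `2x + relint K` and `2y + relint K`
are disjoint: a common point `2x + a = 2y + b` would put the nonzero lattice point
`x - y = (b - a) / 2` into `relint K`, which is convex and symmetric. Each translate lies in `3K`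
by convexity, and `relint K` contains `rK` for every `r < 1`, so its `d'`-dimensional Hausdorff
measure is at least that of `K`. Adding up volumes inside `3K` and using the scaling
`Vol(3K) = 3^{d'} Vol(K)` gives the bound, first for finite sets of lattice points and hence for
`K_ℤ`.
-/

open Set
open scoped Pointwise

noncomputable section

open MeasureTheory
open Filter Function Topology
open scoped NNReal ENNReal

theorem neg_mem_interior_of_forall_neg_mem {G : Type*} [InvolutiveNeg G] [TopologicalSpace G]
    [ContinuousNeg G] {s : Set G} (hsym : ∀ x ∈ s, -x ∈ s) {x : G} (hx : x ∈ interior s) :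
    -x ∈ interior s := by
  refine mem_interior_iff_mem_nhds.2 (mem_of_superset ?_ fun y (hy : -y ∈ s) => ?_)
  · exact continuous_neg.tendsto' (-x) x (neg_neg x) (mem_interior_iff_mem_nhds.1 hx)
  · simpa using hsym _ hy

theorem Convex.zero_mem_of_forall_neg_mem {E : Type*} [AddCommGroup E] [Module ℝ E]
    {s : Set E} (hs : Convex ℝ s) (hsym : ∀ x ∈ s, -x ∈ s) (hne : s.Nonempty) : (0 : E) ∈ s := by
  obtain ⟨x, hx⟩ := hne
  simpa using hs hx (hsym x hx) (by norm_num : (0 : ℝ) ≤ 2⁻¹) (by norm_num : (0 : ℝ) ≤ 2⁻¹)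
    (by norm_num)

theorem Convex.smul_vadd_subset_add_one_smul {E : Type*} [AddCommGroup E] [Module ℝ E]
    {s : Set E} (hs : Convex ℝ s) {x : E} (hx : x ∈ s) {a : ℝ} (ha : 0 ≤ a) :
    a • x +ᵥ s ⊆ (a + 1) • s := by
  rw [hs.add_smul ha zero_le_one, one_smul]
  rintro _ ⟨y, hy, rfl⟩
  exact add_mem_add (smul_mem_smul_set hx) hy

section SymmetricConvex

variable {E : Type*} [AddCommGroup E] [Module ℝ E] [TopologicalSpace E]
  [IsTopologicalAddGroup E] [ContinuousConstSMul ℝ E] {s : Set E}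

theorem Convex.inv_two_smul_sub_mem_interior (hs : Convex ℝ s) (hsym : ∀ x ∈ s, -x ∈ s)
    {a b : E} (ha : a ∈ interior s) (hb : b ∈ interior s) : (2⁻¹ : ℝ) • (b - a) ∈ interior s := by
  convert hs.interior hb (neg_mem_interior_of_forall_neg_mem hsym ha)
    (by norm_num : (0 : ℝ) ≤ 2⁻¹) (by norm_num : (0 : ℝ) ≤ 2⁻¹) (by norm_num) using 1
  module

theorem Convex.smul_mem_interior_of_forall_neg_mem (hs : Convex ℝ s) (hsym : ∀ x ∈ s, -x ∈ s)
    (hne : (interior s).Nonempty) {x : E} (hx : x ∈ s) {r : ℝ} (hr₀ : 0 ≤ r) (hr₁ : r < 1) :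
    r • x ∈ interior s := by
  obtain ⟨y, hy⟩ := hne
  have h0 : (0 : E) ∈ interior s := by
    simpa using hs.inv_two_smul_sub_mem_interior hsym hy hy
  simpa using hs.combo_self_interior_mem_interior hx h0 hr₀ (sub_pos.2 hr₁) (add_sub_cancel r 1)

end SymmetricConvex

section IntrinsicInterior

variable {V : Type*} [NormedAddCommGroup V] [NormedSpace ℝ V]

theorem intrinsicInterior_eq_interior_of_affineSpan_eq_top {s : Set V}
    (h : affineSpan ℝ s = ⊤) : intrinsicInterior ℝ s = interior s := by
  refine Subset.antisymm ?_ interior_subset_intrinsicInterior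
  have hopen : IsOpenMap ((↑) : affineSpan ℝ s → V) :=
    (h ▸ isOpen_univ : IsOpen (affineSpan ℝ s : Set V)).isOpenMap_subtype_val
  have hsub : ((↑) : affineSpan ℝ s → V) '' interior ((↑) ⁻¹' s) ⊆ s :=
    image_subset_iff.2 interior_subset
  exact interior_maximal hsub (hopen _ isOpen_interior)

theorem affineSpan_coe_preimage_span_eq_top {s : Set V} (h0 : (0 : V) ∈ s) :
    affineSpan ℝ (((↑) : Submodule.span ℝ s → V) ⁻¹' s) = ⊤ := by
  have h0' : (0 : Submodule.span ℝ s) ∈ ((↑) : Submodule.span ℝ s → V) ⁻¹' s := h0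
  rw [AffineSubspace.affineSpan_eq_top_iff_vectorSpan_eq_top_of_nonempty ℝ _ _ ⟨0, h0'⟩,
    vectorSpan_eq_span_vsub_set_right ℝ h0']
  simp

theorem intrinsicInterior_eq_image_interior_span {s : Set V} (h0 : (0 : V) ∈ s) :
    intrinsicInterior ℝ s = ((↑) : Submodule.span ℝ s → V) '' interior ((↑) ⁻¹' s) := by
  set E := Submodule.span ℝ s
  have himage : E.subtypeₗᵢ.toAffineIsometry '' ((↑) ⁻¹' s) = s :=
    (Subtype.image_preimage_coe E s).trans (inter_eq_right.2 Submodule.subset_span)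
  calc intrinsicInterior ℝ s
      = intrinsicInterior ℝ (E.subtypeₗᵢ.toAffineIsometry '' ((↑) ⁻¹' s)) := by rw [himage]
    _ = E.subtypeₗᵢ.toAffineIsometry '' intrinsicInterior ℝ ((↑) ⁻¹' s) :=
        AffineIsometry.intrinsicInterior_image _ _
    _ = ((↑) : E → V) '' interior ((↑) ⁻¹' s) := by
        rw [intrinsicInterior_eq_interior_of_affineSpan_eq_top (V := E)
          (affineSpan_coe_preimage_span_eq_top h0)]
        rfl

theorem measurableSet_intrinsicInterior [FiniteDimensional ℝ V] [MeasurableSpace V]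
    [BorelSpace V] (s : Set V) : MeasurableSet (intrinsicInterior ℝ s) :=
  (affineSpan ℝ s).closed_of_finiteDimensional.measurableSet.subtype_image
    isOpen_interior.measurableSet

variable {K : Set V}

theorem Convex.inv_two_smul_sub_mem_intrinsicInterior (hK : Convex ℝ K)
    (hsym : ∀ x ∈ K, -x ∈ K) {a b : V} (ha : a ∈ intrinsicInterior ℝ K)
    (hb : b ∈ intrinsicInterior ℝ K) : (2⁻¹ : ℝ) • (b - a) ∈ intrinsicInterior ℝ K := by
  rw [intrinsicInterior_eq_image_interior_span
    (hK.zero_mem_of_forall_neg_mem hsym ⟨a, intrinsicInterior_subset ha⟩)] at *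
  obtain ⟨a, ha, rfl⟩ := ha
  obtain ⟨b, hb, rfl⟩ := hb
  exact ⟨_, (hK.linear_preimage (Submodule.span ℝ K).subtype).inv_two_smul_sub_mem_interior
    (fun x hx => by simpa using hsym _ hx) ha hb, by simp⟩

theorem Convex.smul_mem_intrinsicInterior_of_forall_neg_mem [FiniteDimensional ℝ V]
    (hK : Convex ℝ K) (hsym : ∀ x ∈ K, -x ∈ K) {x : V} (hx : x ∈ K) {r : ℝ} (hr₀ : 0 ≤ r)
    (hr₁ : r < 1) : r • x ∈ intrinsicInterior ℝ K := by
  have h0 := hK.zero_mem_of_forall_neg_mem hsym ⟨x, hx⟩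
  have hs := hK.linear_preimage (Submodule.span ℝ K).subtype
  rw [intrinsicInterior_eq_image_interior_span h0]
  refine ⟨_, hs.smul_mem_interior_of_forall_neg_mem (fun x hx => by simpa using hsym _ hx)
    (hs.interior_nonempty_iff_affineSpan_eq_top.2 (affineSpan_coe_preimage_span_eq_top h0))
    (x := ⟨x, Submodule.subset_span hx⟩) hx hr₀ hr₁, by simp⟩

end IntrinsicInterior

section Hausdorff

variable {E : Type*} [NormedAddCommGroup E] [NormedSpace ℝ E] [MeasurableSpace E] [BorelSpace E]
  {d : ℝ}

theorem hausdorffMeasure_smul_of_pos (hd : 0 ≤ d) {r : ℝ} (hr : 0 < r) (s : Set E) :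
    μH[d] (r • s) = ENNReal.ofReal r ^ d * μH[d] s := by
  rw [Measure.hausdorffMeasure_smul₀ hd hr.ne', ENNReal.smul_def, smul_eq_mul,
    ENNReal.coe_rpow_of_nonneg _ hd, ← Real.enorm_eq_ofReal hr.le]
  rfl

theorem hausdorffMeasure_le_of_forall_smul_subset (hd : 0 ≤ d) {s t : Set E}
    (h : ∀ r : ℝ, 0 < r → r < 1 → r • s ⊆ t) : μH[d] s ≤ μH[d] t := by
  have hpow : Tendsto (fun r : ℝ => ENNReal.ofReal r ^ d) (𝓝[<] 1) (𝓝 1) :=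
    ((ENNReal.continuous_rpow_const.comp ENNReal.continuous_ofReal).tendsto' 1 1
      (by simp)).mono_left nhdsWithin_le_nhds
  have hlim : Tendsto (fun r : ℝ => ENNReal.ofReal r ^ d * μH[d] s) (𝓝[<] 1) (𝓝 (μH[d] s)) := by
    simpa using ENNReal.Tendsto.mul_const hpow (Or.inl one_ne_zero)
  refine le_of_tendsto hlim ?_
  filter_upwards [Ioo_mem_nhdsLT (zero_lt_one' ℝ)] with r hr
  rw [← hausdorffMeasure_smul_of_pos hd hr.1]
  exact measure_mono (h r hr.1 hr.2)

end Hausdorff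

theorem Finset.card_mul_measure_le_of_pairwiseDisjoint_vadd {G ι : Type*} [AddGroup G]
    [MeasurableSpace G] [MeasurableAdd G] {μ : Measure G} [μ.IsAddLeftInvariant]
    {t u : Set G} (ht : MeasurableSet t) (F : Finset ι) (v : ι → G)
    (hdisj : (F : Set ι).PairwiseDisjoint fun i => v i +ᵥ t) (hsub : ∀ i ∈ F, v i +ᵥ t ⊆ u) :
    F.card * μ t ≤ μ u :=
  calc F.card * μ t = ∑ i ∈ F, μ (v i +ᵥ t) := by simp [measure_vadd]
    _ = μ (⋃ i ∈ F, v i +ᵥ t) := (measure_biUnion_finset hdisj fun i _ => ht.const_vadd _).symm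
    _ ≤ μ u := measure_mono (iUnion₂_subset hsub)

theorem Set.finite_and_ncard_le_of_forall_finset_card_le {α : Type*} {s : Set α} {n : ℕ}
    (h : ∀ F : Finset α, ↑F ⊆ s → F.card ≤ n) : s.Finite ∧ s.ncard ≤ n := by
  have hfin : s.Finite := by
    by_contra hinf
    obtain ⟨F, hFs, hF⟩ := Set.Infinite.exists_subset_card_eq hinf (n + 1)
    have := h F hFs
    omega
  exact ⟨hfin, by simpa [Set.ncard_eq_toFinset_card s hfin] using h hfin.toFinset (by simp)⟩

theorem ic_sub {d : ℕ} (x y : Fin d → ℤ) : ic (x - y) = ic x - ic y := by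
  funext i
  simp [ic]

section Lattice

variable {d : ℕ} {K : Set (Fin d → ℝ)}

theorem pairwise_disjoint_two_smul_ic_vadd_intrinsicInterior (hK : Convex ℝ K)
    (hsym : ∀ x ∈ K, -x ∈ K) (hint : relintLatticePts K = {0}) :
    Pairwise (Disjoint on fun x : Fin d → ℤ => (2 : ℝ) • ic x +ᵥ intrinsicInterior ℝ K) := by
  intro x y hxy
  rw [Function.onFun, Set.disjoint_left]
  rintro _ ⟨a, ha, rfl⟩ ⟨b, hb, hab : (2 : ℝ) • ic y + b = (2 : ℝ) • ic x + a⟩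
  have hdiff : ic (x - y) = (2⁻¹ : ℝ) • (b - a) := by
    rw [ic_sub]
    linear_combination (norm := module) (-2⁻¹ : ℝ) • hab
  have hmem : x - y ∈ relintLatticePts K :=
    show ic (x - y) ∈ _ from hdiff ▸ hK.inv_two_smul_sub_mem_intrinsicInterior hsym ha hb
  rw [hint, mem_singleton_iff, sub_eq_zero] at hmem
  exact hxy hmem

theorem card_mul_hausdorffMeasure_intrinsicInterior_le (hK : Convex ℝ K)
    (hsym : ∀ x ∈ K, -x ∈ K) (hint : relintLatticePts K = {0}) (δ : ℝ)
    (F : Finset (Fin d → ℤ)) (hF : ↑F ⊆ latticePts K) :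
    F.card * μH[δ] (intrinsicInterior ℝ K) ≤ μH[δ] ((3 : ℝ) • K) :=
  F.card_mul_measure_le_of_pairwiseDisjoint_vadd (measurableSet_intrinsicInterior K) _
    ((pairwise_disjoint_two_smul_ic_vadd_intrinsicInterior hK hsym hint).set_pairwise _)
    fun x hx => (vadd_set_mono intrinsicInterior_subset).trans <| by
      simpa [two_add_one_eq_three] using hK.smul_vadd_subset_add_one_smul (hF hx) zero_le_two

end Lattice

theorem card_latticePts_mul_volume_le_general {d : ℕ} (K : Set (Fin d → ℝ))
    (hconv : Convex ℝ K) (hsym : K = -K)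
    (hint : relintLatticePts K = {0})
    (d' : ℕ)
    (hvolpos : 0 < μH[(d' : ℝ)] K) (hvolfin : μH[(d' : ℝ)] K < ⊤) :
    ((latticePts K).ncard : ENNReal) * μH[(d' : ℝ)] K ≤ μH[(d' : ℝ)] ((3 : ℝ) • K) ∧
    μH[(d' : ℝ)] ((3 : ℝ) • K) = (3 : ENNReal) ^ d' * μH[(d' : ℝ)] K ∧
    (latticePts K).Finite ∧ (latticePts K).ncard ≤ 3 ^ d' := by
  have hneg : ∀ x ∈ K, -x ∈ K := fun x hx => by rw [hsym]; simpa using hx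
  have hvol3 : μH[(d' : ℝ)] ((3 : ℝ) • K) = 3 ^ d' * μH[(d' : ℝ)] K := by
    rw [hausdorffMeasure_smul_of_pos d'.cast_nonneg three_pos, ENNReal.rpow_natCast]
    norm_num
  have hvol_relint : μH[(d' : ℝ)] K ≤ μH[(d' : ℝ)] (intrinsicInterior ℝ K) :=
    hausdorffMeasure_le_of_forall_smul_subset d'.cast_nonneg fun r hr₀ hr₁ =>
      smul_set_subset_iff.2 fun x hx =>
        hconv.smul_mem_intrinsicInterior_of_forall_neg_mem hneg hx hr₀.le hr₁
  have hcard : ∀ F : Finset (Fin d → ℤ), ↑F ⊆ latticePts K →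
      (F.card : ℝ≥0∞) * μH[(d' : ℝ)] K ≤ μH[(d' : ℝ)] ((3 : ℝ) • K) := fun F hF =>
    (mul_le_mul_right hvol_relint _).trans
      (card_mul_hausdorffMeasure_intrinsicInterior_le hconv hneg hint _ F hF)
  have hcard_le : ∀ F : Finset (Fin d → ℤ), ↑F ⊆ latticePts K → F.card ≤ 3 ^ d' := by
    intro F hF
    have h := hcard F hF
    rw [hvol3, ENNReal.mul_le_mul_iff_left hvolpos.ne' hvolfin.ne] at h
    exact_mod_cast h
  obtain ⟨hfin, hncard⟩ := Set.finite_and_ncard_le_of_forall_finset_card_le hcard_le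
  refine ⟨?_, hvol3, hfin, hncard⟩
  simpa [Set.ncard_eq_toFinset_card _ hfin] using hcard hfin.toFinset (by simp)

/-- Volume form of Minkowski's bound: if `K` is a centrally-symmetric convex set of
    dimension `d'` with `K°_ℤ = {0}` and finite positive `d'`-dimensional volume, then
    `|K_ℤ| ⬝ Vol(K) ≤ Vol(3K) = 3^{d'} ⬝ Vol(K)`; in particular `|K_ℤ| ≤ 3^{d'}`. -/
theorem card_latticePts_mul_volume_le {d : ℕ} (K : Set (Fin d → ℝ))
    (hconv : Convex ℝ K) (hsym : K = -K)
    (hint : relintLatticePts K = {0})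
    (d' : ℕ) (hd' : d' = Module.finrank ℝ (vectorSpan ℝ K))
    (hvolpos : 0 < μH[(d' : ℝ)] K) (hvolfin : μH[(d' : ℝ)] K < ⊤) :
    ((latticePts K).ncard : ENNReal) * μH[(d' : ℝ)] K ≤ μH[(d' : ℝ)] ((3 : ℝ) • K) ∧
    μH[(d' : ℝ)] ((3 : ℝ) • K) = (3 : ENNReal) ^ d' * μH[(d' : ℝ)] K ∧
    (latticePts K).Finite ∧ (latticePts K).ncard ≤ 3 ^ d' :=
  card_latticePts_mul_volume_le_general K hconv hsym hint d' hvolpos hvolfin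
end
end
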